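/- arXiv:1201.3868 — 10 statements merged into one kernel-verified Lean document; each statement's English description precedes it below -/
import Mathlib

section
/- In a non-mergeable pattern, every variable has at most one point that is not explicitly incompatible with some other point. -/
/-- A pattern: variables, points, variable function, edges and compatibility. -/
structure Pattern where
  V : Type
  A : Type
  var : A → V
  edge : A → A → Prop
  cpt : A → A → Bool

/-- In a non-mergeable pattern (no two distinct points of the same variable
agree on all common defined edges), every variable has at most one point which
is not explicitly incompatible: of any two distinct points of the same
variable, at least one has an incompatibility edge. -/
theorem nonmergeable_at_most_one_not_explicitly_incompatible (P : Pattern)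
    (hedge : ∀ a b, P.edge a b → P.edge b a)
    (hcpt : ∀ a b, P.cpt a b = P.cpt b a)
    (hnm : ∀ a b, a ≠ b → P.var a = P.var b →
      ¬ ∀ c, P.edge a c → P.edge b c → P.cpt a c = P.cpt b c)
    (a b : P.A) (hab : a ≠ b) (hv : P.var a = P.var b) :
    (∃ c, P.edge a c ∧ P.cpt a c = false) ∨
      (∃ c, P.edge b c ∧ P.cpt b c = false) := by
  by_contra h
  push_neg at h
  obtain ⟨ha, hb⟩ := h
  exact hnm a b hab hv fun c hac hbc => by
    have h1 := ha c hac
    have h2 := hb c hbc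
    simp only [ne_eq, Bool.not_eq_false] at h1 h2
    rw [h1, h2]
end

section
/- In an arc-consistent binary CSP instance forbidding T₁ in which the gadget X does not occur and neighbourhood substitution is exhausted, for every ordered pair of distinct variables (v,v'), the relation 'a ≤ b iff every point of A_{v'} compatible with a is compatible with b' is a total preorder on A_v. -/
/-- A binary CSP instance: variables, points (assignments), a variable function
and a total compatibility function on pairs of points. -/
structure CSP where
  V : Type
  A : Type
  var : A → V
  cpt : A → A → Bool

/-- `b` is better than `a` with respect to `v'` (written `a ≤ b` for `v'`):
every point of `A_{v'}` compatible with `a` is also compatible with `b`. -/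
def CSP.le (I : CSP) (v' : I.V) (a b : I.A) : Prop :=
  ∀ c, I.var c = v' → I.cpt a c = true → I.cpt b c = true

/-- Strict order: `a < b` for `v'`. -/
def CSP.lt (I : CSP) (v' : I.V) (a b : I.A) : Prop :=
  I.le v' a b ∧ ¬ I.le v' b a

/-- Equivalence: `a = b` for `v'`. -/
def CSP.eqv (I : CSP) (v' : I.V) (a b : I.A) : Prop :=
  I.le v' a b ∧ I.le v' b a

/-- The pattern `T₁` occurs in `I`: three distinct variables, points `e,f` in
the central variable, `b` and `c` in the two outer variables, with `e`
incompatible with `b` and `c`, and `f` compatible with `b` and `c`. -/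
def CSP.OccursT1 (I : CSP) : Prop :=
  ∃ e f b c : I.A,
    I.var e = I.var f ∧ I.var b ≠ I.var e ∧ I.var c ≠ I.var e ∧
    I.var b ≠ I.var c ∧
    I.cpt e b = false ∧ I.cpt e c = false ∧
    I.cpt f b = true ∧ I.cpt f c = true

/-- The gadget `X` occurs in `I`: points `a,b` in one variable and `c,d` in
another, with `a` incompatible with `c`, `a` compatible with `d`, `b`
compatible with `c` and `b` incompatible with `d`. -/
def CSP.OccursX (I : CSP) : Prop :=
  ∃ a b c d : I.A,
    I.var a = I.var b ∧ I.var c = I.var d ∧ I.var a ≠ I.var c ∧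
    I.cpt a c = false ∧ I.cpt a d = true ∧ I.cpt b c = true ∧ I.cpt b d = false

/-- Arc consistency: every point is compatible with at least one point of every
other variable. -/
def CSP.ArcConsistent (I : CSP) : Prop :=
  ∀ (a : I.A) (v : I.V), v ≠ I.var a → ∃ b, I.var b = v ∧ I.cpt a b = true

/-- Neighbourhood substitution has been applied until convergence: no point is
dominated by another point of the same variable. -/
def CSP.NSReduced (I : CSP) : Prop :=
  ∀ a b, a ≠ b → I.var a = I.var b →
    ¬ ∀ c, I.var c ≠ I.var a → I.cpt a c = true → I.cpt b c = true

/-- A solution: one point per variable, pairwise compatible. -/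
def CSP.Sol (I : CSP) (s : I.V → I.A) : Prop :=
  (∀ v, I.var (s v) = v) ∧ ∀ v w, v ≠ w → I.cpt (s v) (s w) = true

/-- In an arc-consistent instance forbidding `T₁`, in which the gadget `X` does
not occur and neighbourhood substitution is exhausted, for every ordered pair
of distinct variables `(v,v')` the relation `≤` on `A_v` with respect to `v'`
is a total preorder: reflexive, transitive and total. -/
theorem order_is_total_preorder (I : CSP)
    (hsymm : ∀ a b, I.cpt a b = I.cpt b a)
    (hac : I.ArcConsistent)
    (hT1 : ¬ I.OccursT1)
    (hX : ¬ I.OccursX)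
    (hns : I.NSReduced)
    (v v' : I.V) (hvv : v ≠ v') :
    (∀ a, I.var a = v → I.le v' a a) ∧
    (∀ a b c, I.var a = v → I.var b = v → I.var c = v →
      I.le v' a b → I.le v' b c → I.le v' a c) ∧
    (∀ a b, I.var a = v → I.var b = v → I.le v' a b ∨ I.le v' b a) := by
  refine ⟨fun a _ c _ h => h, fun a b c _ _ _ hab hbc e he hae => hbc e he (hab e he hae), ?_⟩
  intro a b ha hb
  by_contra h
  push_neg at h
  obtain ⟨h1, h2⟩ := h
  simp only [CSP.le, not_forall] at h1 h2
  obtain ⟨c, hc, hac, hbc⟩ := h1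
  obtain ⟨d, hd, hbd, had⟩ := h2
  exact hX ⟨a, b, d, c, ha.trans hb.symm, hd.trans hc.symm,
    by rw [ha, hd]; exact hvv,
    Bool.eq_false_iff.2 had, hac, hbd, Bool.eq_false_iff.2 hbc⟩
end

section
/- In an arc-consistent, neighbourhood-substitution-reduced instance forbidding T₁, if a < b < c holds for the order on A_{v₀} with respect to v₁, then there exists a variable v₂ ≠ v₁ such that c < b < a for the order on A_{v₀} with respect to v₂. -/
/-- In an arc-consistent, neighbourhood-substitution-reduced instance
forbidding `T₁` (whose assumed consequences are: (T) totality of each order,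
(E) existence, for distinct points, of a variable witnessing a strict
comparison, and (U) uniqueness of that variable), if `a < b < c` for the order
on `A_{v₀}` with respect to `v₁`, then there is a variable `v₂ ≠ v₁` with
`c < b < a` for the order on `A_{v₀}` with respect to `v₂`. -/
theorem order_reversal (I : CSP)
    (hT : ∀ (v' : I.V) (a b : I.A), I.var a = I.var b → I.var a ≠ v' →
      I.le v' a b ∨ I.le v' b a)
    (hE : ∀ a b : I.A, I.var a = I.var b → a ≠ b →
      ∃ v', v' ≠ I.var a ∧ I.lt v' a b)
    (hU : ∀ (a b : I.A) (v' v'' : I.V), I.lt v' a b → I.lt v'' a b → v' = v'')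
    (v₀ v₁ : I.V) (hv : v₁ ≠ v₀)
    (a b c : I.A) (ha : I.var a = v₀) (hb : I.var b = v₀) (hc : I.var c = v₀)
    (hab : I.lt v₁ a b) (hbc : I.lt v₁ b c) :
    ∃ v₂, v₂ ≠ v₁ ∧ I.lt v₂ c b ∧ I.lt v₂ b a := by
  -- `a ≠ b` and `b ≠ c`
  have hab_ne : a ≠ b := by
    rintro rfl; exact hab.2 hab.1
  have hbc_ne : b ≠ c := by
    rintro rfl; exact hbc.2 hbc.1
  -- get v' with b < a and v'' with c < b
  obtain ⟨v', hv'ne, hba⟩ := hE b a (by rw [hb, ha]) (Ne.symm hab_ne)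
  obtain ⟨v'', hv''ne, hcb⟩ := hE c b (by rw [hc, hb]) (Ne.symm hbc_ne)
  -- v' ≠ v₁
  have hv'v1 : v' ≠ v₁ := by
    rintro rfl; exact hab.2 hba.1
  -- w.r.t. v': ¬ lt v' b c (else v' = v₁ by uniqueness), so le v' c b by totality
  have hlecb : I.le v' c b := by
    rcases hT v' b c (by rw [hb, hc]) (by rw [hb, ← hb]; exact fun h => hv'ne h.symm) with h | h
    · by_contra hnot
      exact hv'v1 (hU b c v' v₁ ⟨h, hnot⟩ hbc)
    · exact h
  -- w.r.t. v'': ¬ lt v'' a b, so le v'' b a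
  have hv''v1 : v'' ≠ v₁ := by
    rintro rfl; exact hbc.2 hcb.1
  have hleba : I.le v'' b a := by
    rcases hT v'' a b (by rw [ha, hb]) (by rw [ha, ← hc]; exact fun h => hv''ne h.symm) with h | h
    · by_contra hnot
      exact hv''v1 (hU a b v'' v₁ ⟨h, hnot⟩ hab)
    · exact h
  -- lt v' c a
  have hca' : I.lt v' c a := by
    refine ⟨fun d hd hcd => hba.1 d hd (hlecb d hd hcd), fun hle => ?_⟩
    exact hba.2 (fun d hd had => hlecb d hd (hle d hd had))
  -- lt v'' c a
  have hca'' : I.lt v'' c a := by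
    refine ⟨fun d hd hcd => hleba d hd (hcb.1 d hd hcd), fun hle => ?_⟩
    exact hcb.2 (fun d hd hbd => hle d hd (hleba d hd hbd))
  have heq : v' = v'' := hU c a v' v'' hca' hca''
  exact ⟨v', hv'v1, heq ▸ hcb, hba⟩
end

section
/- Under the axioms (totality of each order, existence of a strict comparison for each pair in some variable, uniqueness of that variable, and the reversal property), for any a,b,c,d ∈ A_{v₀} and any variable v₁, it is impossible that a = b < c < d for the order with respect to v₁. -/
/-- Under the axioms (T) totality of each order, (E) existence of a strict
comparison for each pair of distinct points in some variable, (U) uniqueness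
of that variable, and (R) the reversal property, for points `a,b,c,d` of a
variable `v₀` and any other variable `v₁` it is impossible that
`a = b < c < d` for the order with respect to `v₁` (with `a ≠ b`). -/
theorem no_eq_lt_lt (I : CSP)
    (hT : ∀ (v' : I.V) (a b : I.A), I.var a = I.var b → I.var a ≠ v' →
      I.le v' a b ∨ I.le v' b a)
    (hE : ∀ a b : I.A, I.var a = I.var b → a ≠ b →
      ∃ v', v' ≠ I.var a ∧ I.lt v' a b)
    (hU : ∀ (a b : I.A) (v' v'' : I.V), I.lt v' a b → I.lt v'' a b → v' = v'')
    (hR : ∀ (v₀ v₁ : I.V) (a b c : I.A),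
      I.var a = v₀ → I.var b = v₀ → I.var c = v₀ → v₁ ≠ v₀ →
      I.lt v₁ a b → I.lt v₁ b c → ∃ v₂, v₂ ≠ v₁ ∧ I.lt v₂ c b ∧ I.lt v₂ b a)
    (v₀ v₁ : I.V) (hv : v₁ ≠ v₀)
    (a b c d : I.A)
    (ha : I.var a = v₀) (hb : I.var b = v₀) (hc : I.var c = v₀)
    (hd : I.var d = v₀) (hab : a ≠ b) :
    ¬ (I.eqv v₁ a b ∧ I.lt v₁ b c ∧ I.lt v₁ c d) := by
  rintro ⟨⟨hab1, hab2⟩, hbc, hcd⟩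
  -- a < c w.r.t. v₁
  have hac : I.lt v₁ a c :=
    ⟨fun x hx h => hbc.1 x hx (hab1 x hx h),
     fun h => hbc.2 (fun x hx hcx => hab1 x hx (h x hx hcx))⟩
  -- reversal of b < c < d and a < c < d
  obtain ⟨v₂, hv21, hdc, hcb⟩ := hR v₀ v₁ b c d hb hc hd hv hbc hcd
  obtain ⟨v₃', hv31, hdc', hca2⟩ := hR v₀ v₁ a c d ha hc hd hv hac hcd
  have hveq : v₂ = v₃' := hU d c v₂ v₃' hdc hdc'
  subst hveq
  -- existence of v₃ with a < b
  obtain ⟨v₃, hv30, hab3⟩ := hE a b (ha.trans hb.symm) hab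
  rw [ha] at hv30
  have hv3ne1 : v₃ ≠ v₁ := fun h => hab3.2 (h ▸ hab2)
  -- totality at v₃ between c and a
  have htot := hT v₃ c a (hc.trans ha.symm) (by rw [hc]; exact fun h => hv30 h.symm)
  by_cases hca3 : I.le v₃ c a
  · -- then c < b w.r.t. v₃, so v₃ = v₂
    have hcb3 : I.lt v₃ c b :=
      ⟨fun x hx h => hab3.1 x hx (hca3 x hx h),
       fun h => hab3.2 (fun x hx hbx => hca3 x hx (h x hx hbx))⟩
    have hv32 : v₃ = v₂ := hU c b v₃ v₂ hcb3 hcb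
    subst hv32
    -- chain c < a < b w.r.t. v₃, reverse it
    obtain ⟨w, hwne, hba, hac'⟩ := hR v₀ v₃ c a b hc ha hb hv30 hca2 hab3
    have hw1 : w = v₁ := hU a c w v₁ hac' hac
    subst hw1
    exact hba.2 hab1
  · -- then a < c w.r.t. v₃, so v₃ = v₁, contradiction
    have hac3 : I.lt v₃ a c := ⟨htot.resolve_left hca3, hca3⟩
    exact hv3ne1 (hU a c v₃ v₁ hac3 hac)
end

section
/- Under the same axioms, for any a,b,c,d ∈ A_{v₀} there is no variable v₁ such that a = b < c = d for the order with respect to v₁. -/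
/-- Under the axioms (T),(E),(U),(R) and the exclusion of the configurations
`a=b<c<d`, `a<b=c<d`, `a<b<c=d` (previous lemma), for points `a,b,c,d` of a
variable `v₀` there is no variable `v₁` with `a = b < c = d` for the order with
respect to `v₁` (with `a ≠ b` and `c ≠ d`). -/
theorem no_eq_lt_eq (I : CSP)
    (hT : ∀ (v' : I.V) (a b : I.A), I.var a = I.var b → I.var a ≠ v' →
      I.le v' a b ∨ I.le v' b a)
    (hE : ∀ a b : I.A, I.var a = I.var b → a ≠ b →
      ∃ v', v' ≠ I.var a ∧ I.lt v' a b)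
    (hU : ∀ (a b : I.A) (v' v'' : I.V), I.lt v' a b → I.lt v'' a b → v' = v'')
    (hR : ∀ (v₀ v₁ : I.V) (a b c : I.A),
      I.var a = v₀ → I.var b = v₀ → I.var c = v₀ → v₁ ≠ v₀ →
      I.lt v₁ a b → I.lt v₁ b c → ∃ v₂, v₂ ≠ v₁ ∧ I.lt v₂ c b ∧ I.lt v₂ b a)
    (hS1 : ∀ (v₀ v₁ : I.V) (a b c d : I.A),
      I.var a = v₀ → I.var b = v₀ → I.var c = v₀ → I.var d = v₀ → v₁ ≠ v₀ →
      a ≠ b → ¬ (I.eqv v₁ a b ∧ I.lt v₁ b c ∧ I.lt v₁ c d))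
    (hS2 : ∀ (v₀ v₁ : I.V) (a b c d : I.A),
      I.var a = v₀ → I.var b = v₀ → I.var c = v₀ → I.var d = v₀ → v₁ ≠ v₀ →
      b ≠ c → ¬ (I.lt v₁ a b ∧ I.eqv v₁ b c ∧ I.lt v₁ c d))
    (hS3 : ∀ (v₀ v₁ : I.V) (a b c d : I.A),
      I.var a = v₀ → I.var b = v₀ → I.var c = v₀ → I.var d = v₀ → v₁ ≠ v₀ →
      c ≠ d → ¬ (I.lt v₁ a b ∧ I.lt v₁ b c ∧ I.eqv v₁ c d))
    (v₀ : I.V) (a b c d : I.A)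
    (ha : I.var a = v₀) (hb : I.var b = v₀) (hc : I.var c = v₀)
    (hd : I.var d = v₀) (hab : a ≠ b) (hcd : c ≠ d) :
    ¬ ∃ v₁, v₁ ≠ v₀ ∧ I.eqv v₁ a b ∧ I.lt v₁ b c ∧ I.eqv v₁ c d := by
  rintro ⟨v₁, hv₁, hAB, hBC, hCD⟩
  have lerefl : ∀ (v : I.V) (x : I.A), I.le v x x := fun v x c hc h => h
  have letrans : ∀ (v : I.V) (x y z : I.A), I.le v x y → I.le v y z → I.le v x z :=
    fun v x y z h1 h2 e he hx => h2 e he (h1 e he hx)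
  -- derived strict relations at v₁
  have hAC : I.lt v₁ a c := by
    refine ⟨letrans _ _ _ _ hAB.1 hBC.1, fun h => hBC.2 (letrans _ _ _ _ h hAB.1)⟩
  have hBD : I.lt v₁ b d := by
    refine ⟨letrans _ _ _ _ hBC.1 hCD.1, fun h => hBC.2 (letrans _ _ _ _ hCD.1 h)⟩
  have hAD : I.lt v₁ a d := by
    refine ⟨letrans _ _ _ _ hAB.1 hBD.1, fun h => hBD.2 (letrans _ _ _ _ h hAB.1)⟩
  -- distinctness
  have hac : a ≠ c := fun h => hBC.2 (h ▸ hAB.1)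
  have had : a ≠ d := fun h => hAD.2 (h ▸ lerefl v₁ a)
  -- helper: if lt v₁ x y, and v ≠ v₀, v ≠ v₁, both points in v₀, then le v y x
  have key : ∀ (v v' : I.V) (x y : I.A), I.var x = v₀ → I.var y = v₀ → v ≠ v₀ →
      v ≠ v' → I.lt v' x y → I.le v y x := by
    intro v v' x y hx hy hvv0 hvv1 hlt
    rcases hT v x y (hx.trans hy.symm) (by rw [hx]; exact fun h => hvv0 h.symm) with h | h
    · by_cases h2 : I.le v y x
      · exact h2
      · exact absurd (hU x y v' v hlt ⟨h, h2⟩) (fun e => hvv1 e.symm)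
    · exact h
  -- v₂ separating a and b
  obtain ⟨v₂, hv₂a, hab₂⟩ := hE a b (ha.trans hb.symm) hab
  rw [ha] at hv₂a
  have hv₂1 : v₂ ≠ v₁ := fun h => hab₂.2 (h ▸ hAB.2)
  have hca₂ : I.le v₂ c a := key v₂ v₁ a c ha hc hv₂a hv₂1 hAC
  have hcb₂ : I.le v₂ c b := key v₂ v₁ b c hb hc hv₂a hv₂1 hBC
  have hda₂ : I.le v₂ d a := key v₂ v₁ a d ha hd hv₂a hv₂1 hAD
  have hdb₂ : I.le v₂ d b := key v₂ v₁ b d hb hd hv₂a hv₂1 hBD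
  have hcbs₂ : I.lt v₂ c b :=
    ⟨hcb₂, fun h => hab₂.2 (letrans _ _ _ _ h hca₂)⟩
  have hdbs₂ : I.lt v₂ d b :=
    ⟨hdb₂, fun h => hab₂.2 (letrans _ _ _ _ h hda₂)⟩
  by_cases hac₂ : I.le v₂ a c
  · -- a ~ c at v₂
    by_cases had₂ : I.le v₂ a d
    · -- a ~ d at v₂; separate c,d by v₃ and derive contradiction
      obtain ⟨v₃, hv₃c, hcd₃⟩ := hE c d (hc.trans hd.symm) hcd
      rw [hc] at hv₃c
      have hv₃1 : v₃ ≠ v₁ := fun h => hcd₃.2 (h ▸ hCD.2)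
      have hv₃2 : v₃ ≠ v₂ := fun h => hcd₃.2 (h ▸ letrans _ _ _ _ hda₂ hac₂)
      have h1 : I.le v₃ d b := key v₃ v₁ b d hb hd hv₃c hv₃1 hBD
      have h2 : I.le v₃ b c := key v₃ v₂ c b hc hb hv₃c hv₃2 hcbs₂
      exact hcd₃.2 (letrans _ _ _ _ h1 h2)
    · -- d < a = c < b at v₂ : forbidden by hS2
      exact hS2 v₀ v₂ d a c b hd ha hc hb hv₂a hac
        ⟨⟨hda₂, had₂⟩, ⟨hac₂, hca₂⟩, hcbs₂⟩
  · -- c < a < b at v₂ : apply hR then hU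
    obtain ⟨v₄, hv₄, hba₄, hac₄⟩ := hR v₀ v₂ c a b hc ha hb hv₂a ⟨hca₂, hac₂⟩ hab₂
    have : v₁ = v₄ := hU a c v₁ v₄ hAC hac₄
    exact hba₄.2 (this ▸ hAB.1)
end

section
/- In an arc-consistent instance forbidding T₁ (with gadget X excluded and the order axioms holding), if the order on A_v with respect to v' has at least three equivalence classes, then |A_v| = |A_{v'}|, the order on A_v w.r.t. v' is strict (a linear order), and so is the order on A_{v'} w.r.t. v. -/

private lemma CSP.not_le_iff (I : CSP) (w : I.V) (a b : I.A) :
    ¬ I.le w a b ↔ ∃ c, I.var c = w ∧ I.cpt a c = true ∧ I.cpt b c = false := by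
  constructor
  · intro h
    simp only [CSP.le] at h
    push_neg at h
    obtain ⟨c, h1, h2, h3⟩ := h
    exact ⟨c, h1, h2, by simpa using h3⟩
  · rintro ⟨c, h1, h2, h3⟩ h
    have := h c h1 h2
    rw [h3] at this
    exact absurd this (by simp)

private lemma CSP.le_trans' (I : CSP) (w : I.V) {a b c : I.A}
    (h1 : I.le w a b) (h2 : I.le w b c) : I.le w a c :=
  fun d hd ha => h2 d hd (h1 d hd ha)

private lemma CSP.ncard_le (I : CSP) [Fintype I.A]
    (hac : I.ArcConsistent)
    (hT : ∀ (w : I.V) (a b : I.A), I.var a = I.var b → I.var a ≠ w →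
      I.le w a b ∨ I.le w b a)
    (v v' : I.V) (hvv : v ≠ v')
    (hstr : ∀ a b : I.A, I.var a = v → I.var b = v → a ≠ b →
      I.lt v' a b ∨ I.lt v' b a) :
    Set.ncard {a : I.A | I.var a = v} ≤ Set.ncard {a : I.A | I.var a = v'} := by
  classical
  have hwf : WellFounded (fun x y : I.A => I.lt v' y x) := by
    haveI : IsTrans I.A (fun x y : I.A => I.lt v' y x) := ⟨by
      rintro x y z ⟨h1, h1'⟩ ⟨h2, h2'⟩
      exact ⟨I.le_trans' v' h2 h1, fun h => h1' (I.le_trans' v' h h2)⟩⟩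
    haveI : IsIrrefl I.A (fun x y : I.A => I.lt v' y x) := ⟨fun x h => h.2 h.1⟩
    exact Finite.wellFounded_of_trans_of_irrefl _
  have wit : ∀ a : I.A, I.var a = v → ∃ c, I.var c = v' ∧ I.cpt a c = true ∧
      ∀ b, I.var b = v → I.lt v' b a → I.cpt b c = false := by
    intro a ha
    by_cases hS : {b : I.A | I.var b = v ∧ I.lt v' b a}.Nonempty
    · obtain ⟨m, ⟨hmv, hma⟩, hmin⟩ := hwf.has_min _ hS
      obtain ⟨c, hc1, hc2, hc3⟩ := (I.not_le_iff v' a m).mp hma.2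
      refine ⟨c, hc1, hc2, fun b hb hba => ?_⟩
      by_contra hbc
      have hbc : I.cpt b c = true := by simpa using hbc
      have hnlebm : ¬ I.le v' b m := (I.not_le_iff v' b m).mpr ⟨c, hc1, hbc, hc3⟩
      rcases hT v' b m (hb.trans hmv.symm) (by rw [hb]; exact hvv) with h | h
      · exact hnlebm h
      · exact hmin b ⟨hb, hba⟩ ⟨h, hnlebm⟩
    · obtain ⟨c, hc1, hc2⟩ := hac a v' (by rw [ha]; exact hvv.symm)
      exact ⟨c, hc1, hc2, fun b hb hba => absurd ⟨hb, hba⟩ (fun h => hS ⟨b, h⟩)⟩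
  set f : I.A → I.A := fun a => if h : I.var a = v then (wit a h).choose else a with hf
  have hmaps : Set.MapsTo f {a : I.A | I.var a = v} {a : I.A | I.var a = v'} := by
    intro a ha
    simp only [Set.mem_setOf_eq] at ha ⊢
    rw [hf]
    simp only [dif_pos ha]
    exact (wit a ha).choose_spec.1
  have hinj : Set.InjOn f {a : I.A | I.var a = v} := by
    intro a ha b hb hab
    simp only [Set.mem_setOf_eq] at ha hb
    by_contra hne
    have hfa : f a = (wit a ha).choose := by rw [hf]; simp [ha]
    have hfb : f b = (wit b hb).choose := by rw [hf]; simp [hb]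
    rcases hstr a b ha hb hne with h | h
    · have h1 : I.cpt a (f b) = false := by
        rw [hfb]; exact (wit b hb).choose_spec.2.2 a ha h
      have h2 : I.cpt a (f a) = true := by
        rw [hfa]; exact (wit a ha).choose_spec.2.1
      rw [hab, h1] at h2
      exact absurd h2 (by simp)
    · have h1 : I.cpt b (f a) = false := by
        rw [hfa]; exact (wit a ha).choose_spec.2.2 b hb h
      have h2 : I.cpt b (f b) = true := by
        rw [hfb]; exact (wit b hb).choose_spec.2.1
      rw [← hab, h1] at h2
      exact absurd h2 (by simp)
  exact Set.ncard_le_ncard_of_injOn f hmaps hinj (Set.toFinite _)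

/-- In an arc-consistent instance forbidding `T₁` (with the gadget `X` excluded
and the order axioms (T),(E),(U) holding, strictness of orders with at least
three equivalence classes being assumed), if the order on `A_v` with respect to
`v'` has at least three equivalence classes, then `|A_v| = |A_{v'}|` and both
the order on `A_v` w.r.t. `v'` and the order on `A_{v'}` w.r.t. `v` are strict
(linear) orders. -/
theorem three_tiers_pair (I : CSP) [Fintype I.A]
    (hsymm : ∀ a b, I.cpt a b = I.cpt b a)
    (hac : I.ArcConsistent)
    (hT1 : ¬ I.OccursT1)
    (hX : ¬ I.OccursX)
    (hT : ∀ (w : I.V) (a b : I.A), I.var a = I.var b → I.var a ≠ w →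
      I.le w a b ∨ I.le w b a)
    (hE : ∀ a b : I.A, I.var a = I.var b → a ≠ b →
      ∃ w, w ≠ I.var a ∧ I.lt w a b)
    (hU : ∀ (a b : I.A) (w w' : I.V), I.lt w a b → I.lt w' a b → w = w')
    (hStrict : ∀ (w w' : I.V), w ≠ w' →
      (∃ a b c : I.A, I.var a = w ∧ I.var b = w ∧ I.var c = w ∧
        I.lt w' a b ∧ I.lt w' b c) →
      ∀ a b : I.A, I.var a = w → I.var b = w → a ≠ b → ¬ I.eqv w' a b)
    (v v' : I.V) (hvv : v ≠ v')
    (h3 : ∃ a b c : I.A, I.var a = v ∧ I.var b = v ∧ I.var c = v ∧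
      I.lt v' a b ∧ I.lt v' b c) :
    Set.ncard {a : I.A | I.var a = v} = Set.ncard {a : I.A | I.var a = v'} ∧
    (∀ a b : I.A, I.var a = v → I.var b = v → a ≠ b →
      I.lt v' a b ∨ I.lt v' b a) ∧
    (∀ a b : I.A, I.var a = v' → I.var b = v' → a ≠ b →
      I.lt v a b ∨ I.lt v b a) := by
  obtain ⟨x, y, z, hx, hy, hz, hxy, hyz⟩ := h3
  have str1 : ∀ a b : I.A, I.var a = v → I.var b = v → a ≠ b →
      I.lt v' a b ∨ I.lt v' b a := by
    intro a b ha hb hne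
    have hne' := hStrict v v' hvv ⟨x, y, z, hx, hy, hz, hxy, hyz⟩ a b ha hb hne
    rcases hT v' a b (ha.trans hb.symm) (by rw [ha]; exact hvv) with h | h
    · exact Or.inl ⟨h, fun h' => hne' ⟨h, h'⟩⟩
    · exact Or.inr ⟨h, fun h' => hne' ⟨h', h⟩⟩
  obtain ⟨c1, hc1v, hc1b, hc1a⟩ := (I.not_le_iff v' y x).mp hxy.2
  obtain ⟨c2, hc2v, hc2c, hc2b⟩ := (I.not_le_iff v' z y).mp hyz.2
  obtain ⟨c0, hc0v, hc0a⟩ := hac x v' (by rw [hx]; exact hvv.symm)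
  have l21 : I.lt v c2 c1 := by
    have hn : ¬ I.le v c1 c2 := (I.not_le_iff v c1 c2).mpr
      ⟨y, hy, by rw [hsymm c1 y]; exact hc1b, by rw [hsymm c2 y]; exact hc2b⟩
    rcases hT v c1 c2 (hc1v.trans hc2v.symm) (by rw [hc1v]; exact hvv.symm) with h | h
    · exact absurd h hn
    · exact ⟨h, hn⟩
  have l10 : I.lt v c1 c0 := by
    have hn : ¬ I.le v c0 c1 := (I.not_le_iff v c0 c1).mpr
      ⟨x, hx, by rw [hsymm c0 x]; exact hc0a, by rw [hsymm c1 x]; exact hc1a⟩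
    rcases hT v c0 c1 (hc0v.trans hc1v.symm) (by rw [hc0v]; exact hvv.symm) with h | h
    · exact absurd h hn
    · exact ⟨h, hn⟩
  have h3' : ∃ a b c : I.A, I.var a = v' ∧ I.var b = v' ∧ I.var c = v' ∧
      I.lt v a b ∧ I.lt v b c := ⟨c2, c1, c0, hc2v, hc1v, hc0v, l21, l10⟩
  have str2 : ∀ a b : I.A, I.var a = v' → I.var b = v' → a ≠ b →
      I.lt v a b ∨ I.lt v b a := by
    intro a b ha hb hne
    have hne' := hStrict v' v hvv.symm h3' a b ha hb hne
    rcases hT v a b (ha.trans hb.symm) (by rw [ha]; exact hvv.symm) with h | h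
    · exact Or.inl ⟨h, fun h' => hne' ⟨h, h'⟩⟩
    · exact Or.inr ⟨h, fun h' => hne' ⟨h', h⟩⟩
  exact ⟨le_antisymm (I.ncard_le hac hT v v' hvv str1)
    (I.ncard_le hac hT v' v hvv.symm str2), str1, str2⟩
end

section
/- If the order on A_v w.r.t. v' is strict with d = |A_v| = |A_{v'}| points on each side, with A_v enumerated a₁ < ... < a_d and A_{v'} enumerated b₁ < ... < b_d (w.r.t. v), and each a_i is compatible with exactly i points of A_{v'}, then for every i the set of points of A_{v'} compatible with a_i is exactly {b_{d+1-i}, ..., b_d}. -/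
/-- If the order on `A_v` w.r.t. `v'` is strict with `d = |A_v| = |A_{v'}|`,
`A_v` enumerated `a₁ < ... < a_d` (here `a 0 < ... < a (d-1)`), `A_{v'}`
enumerated `b₁ < ... < b_d` w.r.t. `v`, and each `aᵢ` compatible with exactly
`i` points of `A_{v'}`, then the set of points of `A_{v'}` compatible with `aᵢ`
is exactly `{b_{d+1-i},...,b_d}` (the top `i` points). -/
theorem compatible_set_is_top_segment (I : CSP) [Fintype I.A]
    (hsymm : ∀ a b, I.cpt a b = I.cpt b a)
    (v v' : I.V) (hvv : v ≠ v') (d : ℕ)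
    (a b : Fin d → I.A)
    (hav : ∀ i, I.var (a i) = v) (hbv : ∀ i, I.var (b i) = v')
    (hasurj : ∀ x, I.var x = v → ∃ i, x = a i)
    (hbsurj : ∀ x, I.var x = v' → ∃ i, x = b i)
    (hainc : ∀ i j : Fin d, i < j → I.lt v' (a i) (a j))
    (hbinc : ∀ i j : Fin d, i < j → I.lt v (b i) (b j))
    (hcard : ∀ i : Fin d,
      Set.ncard {q : I.A | I.var q = v' ∧ I.cpt (a i) q = true} = i.1 + 1) :
    ∀ (i : Fin d) (q : I.A),
      (I.var q = v' ∧ I.cpt (a i) q = true) ↔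
        ∃ j : Fin d, d ≤ i.1 + j.1 + 1 ∧ q = b j := by
  classical
  intro i q
  set T : Finset (Fin d) := Finset.univ.filter (fun j => I.cpt (a i) (b j) = true) with hT
  have hup : ∀ j k : Fin d, j ≤ k → j ∈ T → k ∈ T := by
    intro j k hjk hj
    simp only [hT, Finset.mem_filter, Finset.mem_univ, true_and] at hj ⊢
    rcases lt_or_eq_of_le hjk with h | h
    · have h2 := (hbinc j k h).1 (a i) (hav i)
      rw [hsymm] at h2
      rw [hsymm]
      exact h2 hj
    · rwa [← h]
  have hbinj : Function.Injective b := by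
    intro j k h
    by_contra hne
    rcases Ne.lt_or_gt hne with hlt | hlt
    · exact (hbinc j k hlt).2 (by rw [h]; exact fun c _ hc => hc)
    · exact (hbinc k j hlt).2 (by rw [h]; exact fun c _ hc => hc)
  have hset : {q : I.A | I.var q = v' ∧ I.cpt (a i) q = true} = ↑(T.image b) := by
    ext x
    simp only [Set.mem_setOf_eq, Finset.coe_image, Set.mem_image, Finset.mem_coe, hT,
      Finset.mem_filter, Finset.mem_univ, true_and]
    constructor
    · rintro ⟨hv, hc⟩
      obtain ⟨j, rfl⟩ := hbsurj x hv
      exact ⟨j, hc, rfl⟩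
    · rintro ⟨j, hc, rfl⟩
      exact ⟨hbv j, hc⟩
  have hTcard : T.card = i.1 + 1 := by
    have h := hcard i
    rw [hset, Set.ncard_coe_finset, Finset.card_image_of_injective _ hbinj] at h
    exact h
  have hmem : ∀ j : Fin d, j ∈ T ↔ d ≤ i.1 + j.1 + 1 := by
    intro j
    constructor
    · intro hj
      have hsub : Finset.Ici j ⊆ T := fun k hk => hup j k (Finset.mem_Ici.mp hk) hj
      have hc := Finset.card_le_card hsub
      rw [Fin.card_Ici, hTcard] at hc
      have := j.2
      omega
    · intro hd
      by_contra hj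
      have hsub : T ⊆ Finset.Ioi j := by
        intro k hk
        rw [Finset.mem_Ioi]
        by_contra hkj
        exact hj (hup k j (le_of_not_gt hkj) hk)
      have hc := Finset.card_le_card hsub
      rw [Fin.card_Ioi, hTcard] at hc
      omega
  constructor
  · rintro ⟨hv, hc⟩
    obtain ⟨j, rfl⟩ := hbsurj q hv
    exact ⟨j, (hmem j).mp (by simp [hT, hc]), rfl⟩
  · rintro ⟨j, hd, rfl⟩
    have h := (hmem j).mpr hd
    simp only [hT, Finset.mem_filter, Finset.mem_univ, true_and] at h
    exact ⟨hbv j, h⟩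
end

section
/- Suppose in an instance forbidding T₁, (v,v') is a 3-tiers pair with A_v = {a₁<...<a_d}, A_{v'} = {b₁<...<b_d}, and a_i is compatible with exactly {b_{d+1-i},...,b_d}. Then for every i, if a_i belongs to a solution S, there is a solution S' containing both a_i and b_{d+1-i}. -/
/-- In an instance forbidding `T₁`, if `(v,v')` is a 3-tiers pair with
`A_v = {a₁ < ... < a_d}`, `A_{v'} = {b₁ < ... < b_d}` and `aᵢ` compatible with
exactly `{b_{d+1-i},...,b_d}`, then for every `i`, if `aᵢ` belongs to a
solution `S` there is a solution `S'` containing both `aᵢ` and `b_{d+1-i}`. -/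
theorem solution_through_fusion_pair (I : CSP)
    (hsymm : ∀ a b, I.cpt a b = I.cpt b a)
    (hT1 : ¬ I.OccursT1)
    (hU : ∀ (a b : I.A) (w w' : I.V), I.lt w a b → I.lt w' a b → w = w')
    (v v' : I.V) (hvv : v ≠ v') (d : ℕ)
    (a b : Fin d → I.A)
    (hav : ∀ i, I.var (a i) = v) (hbv : ∀ i, I.var (b i) = v')
    (hbinc : ∀ i j : Fin d, i < j → I.lt v (b i) (b j))
    (hcompat : ∀ (i : Fin d) (q : I.A), I.var q = v' →
      (I.cpt (a i) q = true ↔ ∃ j : Fin d, d ≤ i.1 + j.1 + 1 ∧ q = b j)) :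
    ∀ (i : Fin d) (s : I.V → I.A), I.Sol s → s v = a i →
      ∃ s', I.Sol s' ∧ s' v = a i ∧
        s' v' = b ⟨d - 1 - i.1, by have := i.isLt; omega⟩ := by

  intro i s hs hsv
  have hid : i.1 < d := i.isLt
  obtain ⟨hvar, hcpt⟩ := hs
  set idx : Fin d := ⟨d - 1 - i.1, by omega⟩ with hidx
  have hai : I.cpt (a i) (b idx) = true := by
    rw [hcompat i (b idx) (hbv idx)]
    exact ⟨idx, by simp [hidx]; omega, rfl⟩
  obtain ⟨j, hj, hq⟩ := (hcompat i (s v') (hvar v')).1 (by rw [← hsv]; exact hcpt v v' hvv)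
  have key : ∀ c0, I.var c0 ≠ v' → I.var c0 ≠ v →
      I.cpt (b j) c0 = true → I.cpt (b idx) c0 = true := by
    intro c0 hc0v' hc0v hcj
    by_cases hje : j = idx
    · rwa [hje] at hcj
    · have hltv : idx.1 < j.1 := by
        have : j.1 ≠ idx.1 := fun h => hje (Fin.ext h)
        simp only [hidx] at this ⊢
        omega
      have hlt : idx < j := by rw [Fin.lt_def]; exact hltv
      obtain ⟨hle, hnle⟩ := hbinc idx j hlt
      by_contra hfalse
      have hfalse' : I.cpt (b idx) c0 = false := by
        cases h : I.cpt (b idx) c0 with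
        | false => rfl
        | true => exact absurd h hfalse
      have hwit : ∃ c', I.var c' = v ∧ I.cpt (b j) c' = true ∧ I.cpt (b idx) c' = false := by
        by_contra h
        push_neg at h
        apply hnle
        intro c hcv hc
        cases h2 : I.cpt (b idx) c with
        | true => rfl
        | false => exact absurd h2 (h c hcv hc)
      obtain ⟨c', hc'v, hc'j, hc'i⟩ := hwit
      exact hT1 ⟨b idx, b j, c', c0, by rw [hbv, hbv],
        by rw [hc'v, hbv]; exact hvv,
        by rw [hbv]; exact hc0v',
        by rw [hc'v]; exact fun h => hc0v h.symm,
        hc'i, hfalse', hc'j, hcj⟩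
  haveI : DecidableEq I.V := Classical.decEq _
  refine ⟨Function.update s v' (b idx), ⟨?_, ?_⟩, ?_, ?_⟩
  · intro w
    by_cases hw : w = v'
    · subst hw; rw [Function.update_self]; exact hbv idx
    · rw [Function.update_of_ne hw]; exact hvar w
  · intro w w' hww'
    by_cases hw : w = v' <;> by_cases hw' : w' = v'
    · exact absurd (hw.trans hw'.symm) hww'
    · subst hw
      rw [Function.update_self, Function.update_of_ne hw']
      by_cases hwv : w' = v
      · subst hwv; rw [hsv, hsymm]; exact hai
      · exact key (s w') (by rw [hvar]; exact hw') (by rw [hvar]; exact hwv)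
          (by rw [← hq]; exact hcpt w w' (fun h => hw' h.symm))
    · subst hw'
      rw [Function.update_self, Function.update_of_ne hw, hsymm]
      by_cases hwv : w = v
      · subst hwv; rw [hsv, hsymm]; exact hai
      · exact key (s w) (by rw [hvar]; exact hw) (by rw [hvar]; exact hwv)
          (by rw [← hq]; exact hcpt w' w (fun h => hw h.symm))
    · rw [Function.update_of_ne hw, Function.update_of_ne hw']
      exact hcpt w w' hww'
  · rw [Function.update_of_ne hvv]; exact hsv
  · rw [Function.update_self]
end

section
/- In the one-winner/one-loser framework for instances forbidding T₁ (all pairs 2-tiers), every variable is one-winner or one-loser: it is impossible to have distinct variables v₁,v₂ and points a,b,c,e,f ∈ A_v with a ≠ b, e ≠ f, a = b < c w.r.t. v₁ and c < e = f w.r.t. v₂ (the two configurations force a contradiction with axioms (T),(E),(U) and the exclusion of a=b<c=d). -/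
/-- In the one-winner/one-loser framework for instances forbidding `T₁` (all
pairs 2-tiers), every variable is one-winner or one-loser: under axioms
(T),(E),(U) and the exclusion of the shape `x = y < z = w`, it is impossible to
have distinct variables `v₁,v₂` (both different from `v`) and points
`a,b,c,e,f ∈ A_v` with `a ≠ b`, `e ≠ f`, `a = b < c` w.r.t. `v₁` and
`c < e = f` w.r.t. `v₂`. -/
theorem one_winner_or_one_loser (I : CSP)
    (hT : ∀ (w : I.V) (a b : I.A), I.var a = I.var b → I.var a ≠ w →
      I.le w a b ∨ I.le w b a)
    (hE : ∀ a b : I.A, I.var a = I.var b → a ≠ b →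
      ∃ w, w ≠ I.var a ∧ I.lt w a b)
    (hU : ∀ (a b : I.A) (w w' : I.V), I.lt w a b → I.lt w' a b → w = w')
    (hTwoTwo : ∀ (v₀ w : I.V) (x y z u : I.A),
      I.var x = v₀ → I.var y = v₀ → I.var z = v₀ → I.var u = v₀ → w ≠ v₀ →
      x ≠ y → z ≠ u → ¬ (I.eqv w x y ∧ I.lt w y z ∧ I.eqv w z u))
    (v v₁ v₂ : I.V) (h12 : v₁ ≠ v₂) (h1v : v₁ ≠ v) (h2v : v₂ ≠ v)
    (a b c e f : I.A)
    (hav : I.var a = v) (hbv : I.var b = v) (hcv : I.var c = v)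
    (hev : I.var e = v) (hfv : I.var f = v)
    (hab : a ≠ b) (hef : e ≠ f) :
    ¬ (I.eqv v₁ a b ∧ I.lt v₁ b c ∧ I.lt v₂ c e ∧ I.eqv v₂ e f) := by
  rintro ⟨hab1, hbc1, hce2, hef2⟩
  have letrans : ∀ (w : I.V) (x y z : I.A), I.le w x y → I.le w y z → I.le w x z :=
    fun w x y z h1 h2 d hd hx => h2 d hd (h1 d hd hx)
  have lerefl : ∀ (w : I.V) (x : I.A), I.le w x x := fun w x d hd h => h
  -- derived strict comparisons
  have hac1 : I.lt v₁ a c :=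
    ⟨letrans _ _ _ _ hab1.1 hbc1.1, fun h => hbc1.2 (letrans _ _ _ _ h hab1.1)⟩
  have hcf2 : I.lt v₂ c f :=
    ⟨letrans _ _ _ _ hce2.1 hef2.1, fun h => hce2.2 (letrans _ _ _ _ hef2.1 h)⟩
  have hac : a ≠ c := fun h => (h ▸ hac1).2 (lerefl _ _)
  have hbc : b ≠ c := fun h => (h ▸ hbc1).2 (lerefl _ _)
  have hce : c ≠ e := fun h => (h ▸ hce2).2 (lerefl _ _)
  have hcf : c ≠ f := fun h => (h ▸ hcf2).2 (lerefl _ _)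
  -- a strict comparison at w' forces the reverse ≤ at any other variable w ≠ v
  have rev : ∀ (w w' : I.V) (x y : I.A), I.var x = v → I.var y = v → w ≠ v →
      I.lt w' x y → w ≠ w' → I.le w y x := by
    intro w w' x y hx hy hwv hlt hne
    rcases hT w x y (hx.trans hy.symm) (by rw [hx]; exact fun h => hwv h.symm) with h | h
    · by_cases h2 : I.le w y x
      · exact h2
      · exact absurd (hU x y w w' ⟨h, h2⟩ hlt) hne
    · exact h
  have lec_a : I.le v₂ c a := rev v₂ v₁ a c hav hcv h2v hac1 h12.symm
  have lec_b : I.le v₂ c b := rev v₂ v₁ b c hbv hcv h2v hbc1 h12.symm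
  have lee_c : I.le v₁ e c := rev v₁ v₂ c e hcv hev h1v hce2 h12
  have lef_c : I.le v₁ f c := rev v₁ v₂ c f hcv hfv h1v hcf2 h12
  -- e <₁ c and f <₁ c (otherwise forbidden shape a=b<e=c resp. a=b<f=c at v₁)
  have hec1 : I.lt v₁ e c := by
    refine ⟨lee_c, fun hce1 => ?_⟩
    exact hTwoTwo v v₁ a b e c hav hbv hev hcv h1v hab (Ne.symm hce)
      ⟨hab1, ⟨letrans _ _ _ _ hbc1.1 hce1, fun h => hbc1.2 (letrans _ _ _ _ hce1 h)⟩,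
        ⟨lee_c, hce1⟩⟩
  have hfc1 : I.lt v₁ f c := by
    refine ⟨lef_c, fun hcf1 => ?_⟩
    exact hTwoTwo v v₁ a b f c hav hbv hfv hcv h1v hab (Ne.symm hcf)
      ⟨hab1, ⟨letrans _ _ _ _ hbc1.1 hcf1, fun h => hbc1.2 (letrans _ _ _ _ hcf1 h)⟩,
        ⟨lef_c, hcf1⟩⟩
  -- c <₂ a and c <₂ b (otherwise forbidden shape a=c<e=f resp. b=c<e=f at v₂)
  have hca2 : I.lt v₂ c a := by
    refine ⟨lec_a, fun hac2 => ?_⟩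
    exact hTwoTwo v v₂ a c e f hav hcv hev hfv h2v hac hef ⟨⟨hac2, lec_a⟩, hce2, hef2⟩
  have hcb2 : I.lt v₂ c b := by
    refine ⟨lec_b, fun hbc2 => ?_⟩
    exact hTwoTwo v v₂ b c e f hbv hcv hev hfv h2v hbc hef ⟨⟨hbc2, lec_b⟩, hce2, hef2⟩
  -- witnesses for strict comparisons of e and f, in both directions
  obtain ⟨w₄, hw4v, hw4⟩ := hE e f (hev.trans hfv.symm) hef
  obtain ⟨w₅, hw5v, hw5⟩ := hE f e (hfv.trans hev.symm) hef.symm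
  rw [hev] at hw4v
  rw [hfv] at hw5v
  have hw4v2 : w₄ ≠ v₂ := fun h => (h ▸ hw4).2 hef2.2
  have hw5v2 : w₅ ≠ v₂ := fun h => (h ▸ hw5).2 hef2.1
  have hw4v1 : w₄ = v₁ := by
    by_contra hne
    exact hw4.2 (letrans _ _ _ _ (rev w₄ v₂ c f hcv hfv hw4v hcf2 hw4v2)
      (rev w₄ v₁ e c hev hcv hw4v hec1 hne))
  have hw5v1 : w₅ = v₁ := by
    by_contra hne
    exact hw5.2 (letrans _ _ _ _ (rev w₅ v₂ c e hcv hev hw5v hce2 hw5v2)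
      (rev w₅ v₁ f c hfv hcv hw5v hfc1 hne))
  exact (hw4v1 ▸ hw4).2 (hw5v1 ▸ hw5).1
end

section
/- In an arc-consistent binary CSP instance forbidding T₂ that contains the gadget V⁻ on variables v₄,v₅,v₆ (a point a ∈ A_{v₄} incompatible with some b ∈ A_{v₅} and some c ∈ A_{v₆}), the constraint between v₄ and v₅ is functional from v₅ to v₄, i.e., every point of A_{v₅} is compatible with exactly one point of A_{v₄}. -/
/-- The pattern `T₂` occurs in `I`: three distinct variables, points `a,b` in
the central variable `v₀`, points `c,d` in `v₁`, a point `e` in `v₂`, with the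
incompatibility edges `{b,c}` and `{b,e}` and the compatibility edges `{a,d}`,
`{b,d}` and `{a,e}` (as in pattern `T₂` of the paper). -/
def CSP.OccursT2 (I : CSP) : Prop :=
  ∃ a b c d e : I.A,
    I.var a = I.var b ∧ I.var c = I.var d ∧
    I.var c ≠ I.var a ∧ I.var e ≠ I.var a ∧ I.var e ≠ I.var c ∧
    I.cpt b c = false ∧ I.cpt b e = false ∧
    I.cpt a d = true ∧ I.cpt b d = true ∧ I.cpt a e = true

/-- No single-valued variables: every domain has at least two points. -/
def CSP.NoSingleton (I : CSP) : Prop :=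
  ∀ v : I.V, ∃ x y : I.A, x ≠ y ∧ I.var x = v ∧ I.var y = v

/-- The gadget `N` occurs in `I`: a point `a` compatible with two distinct
points `b,c` of another variable, where `c` is incompatible with some point of
the variable of `a`. -/
def CSP.OccursN (I : CSP) : Prop :=
  ∃ a b c x : I.A,
    I.var b = I.var c ∧ b ≠ c ∧ I.var a ≠ I.var b ∧
    I.cpt a b = true ∧ I.cpt a c = true ∧
    I.var x = I.var a ∧ I.cpt c x = false

/-- In an arc-consistent binary CSP instance with no single-valued variables,
forbidding `T₂` and with the gadget `N` eliminated, if the gadget `V⁻` occurs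
on `v₄,v₅,v₆` (a point `a ∈ A_{v₄}` incompatible with some `b ∈ A_{v₅}` and
some `c ∈ A_{v₆}`), then the constraint between `v₄` and `v₅` is functional
from `v₅` to `v₄`: every point of `A_{v₅}` is compatible with exactly one point
of `A_{v₄}`. -/
theorem Vminus_implies_functional (I : CSP)
    (hsymm : ∀ a b, I.cpt a b = I.cpt b a)
    (hac : I.ArcConsistent)
    (hdom : I.NoSingleton)
    (hT2 : ¬ I.OccursT2)
    (hN : ¬ I.OccursN)
    (v₄ v₅ v₆ : I.V) (h45 : v₄ ≠ v₅) (h46 : v₄ ≠ v₆) (h56 : v₅ ≠ v₆)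
    (a b c : I.A)
    (hav : I.var a = v₄) (hbv : I.var b = v₅) (hcv : I.var c = v₆)
    (hab : I.cpt a b = false) (hac' : I.cpt a c = false) :
    ∀ p, I.var p = v₅ → ∃! q, I.var q = v₄ ∧ I.cpt p q = true := by
  intro p hpv
  obtain ⟨q, hqv, hpq⟩ := hac p v₄ (by rw [hpv]; exact h45)
  refine ⟨q, ⟨hqv, hpq⟩, ?_⟩
  rintro q' ⟨hq'v, hpq'⟩
  by_contra hne
  -- Step 1: q' is compatible with every point of v₅
  have hall : ∀ x, I.var x = v₅ → I.cpt q' x = true := by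
    intro x hxv
    by_contra hx
    exact hN ⟨p, q, q', x, hqv.trans hq'v.symm, fun h => hne h.symm,
      by rw [hpv, hqv]; exact h45.symm, hpq, hpq', hxv.trans hpv.symm, by simpa using hx⟩
  -- Step 2: pick a point y' of v₅ distinct from b
  obtain ⟨x, y, hxy, hxv, hyv⟩ := hdom v₅
  obtain ⟨y', hy'v, hy'b⟩ : ∃ y', I.var y' = v₅ ∧ y' ≠ b := by
    by_cases hx : x = b
    · exact ⟨y, hyv, fun h => hxy (hx.trans h.symm)⟩
    · exact ⟨x, hxv, hx⟩
  -- Step 3: N occurs via (q', y', b, a)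
  exact hN ⟨q', y', b, a, hy'v.trans hbv.symm, hy'b,
    by rw [hq'v, hy'v]; exact h45, hall y' hy'v, hall b hbv,
    hav.trans hq'v.symm, (hsymm b a).trans hab⟩
end
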